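/- For every a ∈ [0,1], let μ_a be the Borel probability measure on ℝ given by μ_a = ((1−a)/2)(δ_{−1} + δ_{1}) + (a/π)·1_{[−1,1]}(ξ)(1 − ξ^2)^{-1/2} dξ, where δ_{±1} are Dirac masses at ±1. Then the characteristic function of μ_a at t = π has strictly negative real part: Re(∫ e^{iπξ} dμ_a(ξ)) = −(1−a) + (a/π) ∫_{-1}^1 cos(πξ)(1 − ξ^2)^{-1/2} dξ < 0. In particular μ_a is not positive-definite. -/

import Mathlib

open MeasureTheory
open Real Set
open scoped ENNReal NNReal

lemma sin_image_Ioo : Real.sin '' Set.Ioo (-(π/2)) (π/2) = Set.Ioo (-1:ℝ) 1 := by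
  ext y
  simp only [Set.mem_image, Set.mem_Ioo]
  constructor
  · rintro ⟨θ, ⟨h1, h2⟩, rfl⟩
    constructor
    · have := Real.strictMonoOn_sin (Set.mem_Icc.2 ⟨le_refl _, by linarith [Real.pi_pos]⟩)
        (Set.mem_Icc.2 ⟨h1.le, h2.le⟩) h1
      simpa using this
    · have := Real.strictMonoOn_sin (Set.mem_Icc.2 ⟨h1.le, h2.le⟩)
        (Set.mem_Icc.2 ⟨by linarith [Real.pi_pos], le_refl _⟩) h2
      simpa using this
  · rintro ⟨hy1, hy2⟩
    exact ⟨Real.arcsin y, ⟨Real.neg_pi_div_two_lt_arcsin.2 hy1, Real.arcsin_lt_pi_div_two.2 hy2⟩,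
      Real.sin_arcsin hy1.le hy2.le⟩

lemma subst_eqOn (g : ℝ → ℝ) :
    Set.EqOn (fun θ => |Real.cos θ| • (g (Real.sin θ) / Real.sqrt (1 - Real.sin θ ^ 2)))
      (fun θ => g (Real.sin θ)) (Set.Ioo (-(π/2)) (π/2)) := by
  intro θ hθ
  have hc : 0 < Real.cos θ := Real.cos_pos_of_mem_Ioo hθ
  have h1 : Real.sqrt (1 - Real.sin θ ^ 2) = Real.cos θ := by
    rw [show (1 : ℝ) - Real.sin θ ^ 2 = Real.cos θ ^ 2 by
      have := Real.sin_sq_add_cos_sq θ; linarith]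
    exact Real.sqrt_sq hc.le
  simp only [h1, abs_of_pos hc, smul_eq_mul]
  rw [mul_comm, div_mul_cancel₀ _ hc.ne']

lemma subst_integral (g : ℝ → ℝ) :
    (∫ ξ in Set.Ioo (-1:ℝ) 1, g ξ / Real.sqrt (1 - ξ ^ 2))
      = ∫ θ in Set.Ioo (-(π/2)) (π/2), g (Real.sin θ) := by
  rw [← sin_image_Ioo, integral_image_eq_integral_abs_deriv_smul measurableSet_Ioo
    (fun x _ => (Real.hasDerivAt_sin x).hasDerivWithinAt)
    (Real.injOn_sin.mono Set.Ioo_subset_Icc_self)]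
  exact setIntegral_congr_fun measurableSet_Ioo (subst_eqOn g)

lemma subst_integrableOn (g : ℝ → ℝ) :
    IntegrableOn (fun ξ => g ξ / Real.sqrt (1 - ξ ^ 2)) (Set.Ioo (-1:ℝ) 1) ↔
      IntegrableOn (fun θ => g (Real.sin θ)) (Set.Ioo (-(π/2)) (π/2)) := by
  rw [← sin_image_Ioo, integrableOn_image_iff_integrableOn_abs_deriv_smul measurableSet_Ioo
    (fun x _ => (Real.hasDerivAt_sin x).hasDerivWithinAt)
    (Real.injOn_sin.mono Set.Ioo_subset_Icc_self)]
  exact integrableOn_congr_fun (subst_eqOn g) measurableSet_Ioo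

lemma pointwise_neg {θ : ℝ} (hθ : θ ∈ Set.Ioo 0 (π/2)) :
    Real.cos (π * Real.sin θ) + Real.cos (π * Real.cos θ) < 0 := by
  obtain ⟨h1, h2⟩ := hθ
  have hpi := Real.pi_pos
  set s := Real.sin θ with hs
  set c := Real.cos θ with hc
  have hs0 : 0 < s := Real.sin_pos_of_pos_of_lt_pi h1 (by linarith)
  have hc0 : 0 < c := Real.cos_pos_of_mem_Ioo ⟨by linarith, h2⟩
  have hsc : s ^ 2 + c ^ 2 = 1 := Real.sin_sq_add_cos_sq θ
  have hs1 : s ≤ 1 := Real.sin_le_one θ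
  have hc1 : c ≤ 1 := Real.cos_le_one θ
  have hsum : 1 < s + c := by nlinarith
  have hsum3 : s + c < 3 := by linarith
  have hd1 : s - c < 1 := by nlinarith
  have hd2 : -1 < s - c := by nlinarith
  rw [Real.cos_add_cos]
  have hA : Real.cos ((π * s + π * c) / 2) < 0 := by
    apply Real.cos_neg_of_pi_div_two_lt_of_lt
    · nlinarith
    · nlinarith
  have hB : 0 < Real.cos ((π * s - π * c) / 2) := by
    apply Real.cos_pos_of_mem_Ioo
    constructor
    · nlinarith
    · nlinarith
  nlinarith

lemma key_integral_neg :
    (∫ ξ in Set.Ioo (-1:ℝ) 1, Real.cos (π * ξ) / Real.sqrt (1 - ξ ^ 2)) < 0 := by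
  rw [subst_integral]
  have hcont : Continuous (fun θ : ℝ => Real.cos (π * Real.sin θ)) := by fun_prop
  have hIoo : (∫ θ in Set.Ioo (-(π/2)) (π/2), Real.cos (π * Real.sin θ))
      = ∫ θ in (-(π/2))..(π/2), Real.cos (π * Real.sin θ) := by
    rw [intervalIntegral.integral_of_le (by linarith [Real.pi_pos]),
      integral_Ioc_eq_integral_Ioo]
  rw [hIoo]
  have hint : ∀ u v : ℝ, IntervalIntegrable (fun θ => Real.cos (π * Real.sin θ)) volume u v :=
    fun u v => hcont.intervalIntegrable u v
  have hsplit : (∫ θ in (-(π/2))..(π/2), Real.cos (π * Real.sin θ))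
      = (∫ θ in (-(π/2))..(0:ℝ), Real.cos (π * Real.sin θ))
        + ∫ θ in (0:ℝ)..(π/2), Real.cos (π * Real.sin θ) :=
    (intervalIntegral.integral_add_adjacent_intervals (hint _ _) (hint _ _)).symm
  have gcont : Continuous (fun θ : ℝ => Real.cos (π * Real.cos θ)) := by fun_prop
  have hneg : (∫ θ in (-(π/2))..(0:ℝ), Real.cos (π * Real.sin θ))
      = ∫ θ in (0:ℝ)..(π/2), Real.cos (π * Real.sin θ) := by
    have h := intervalIntegral.integral_comp_neg (a := (0:ℝ)) (b := π/2)
      (fun θ => Real.cos (π * Real.sin θ))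
    simp only [neg_zero] at h
    rw [← h]
    apply intervalIntegral.integral_congr
    intro x _
    simp [Real.sin_neg]
  have hflip : (∫ θ in (0:ℝ)..(π/2), Real.cos (π * Real.sin θ))
      = ∫ θ in (0:ℝ)..(π/2), Real.cos (π * Real.cos θ) := by
    have h := intervalIntegral.integral_comp_sub_left (a := (0:ℝ)) (b := π/2)
      (fun θ => Real.cos (π * Real.cos θ)) (π/2)
    norm_num at h
    rw [← h]
    apply intervalIntegral.integral_congr
    intro x _
    simp [Real.cos_pi_div_two_sub]
  have hadd : (∫ θ in (0:ℝ)..(π/2),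
        (Real.cos (π * Real.sin θ) + Real.cos (π * Real.cos θ)))
      = (∫ θ in (0:ℝ)..(π/2), Real.cos (π * Real.sin θ))
        + ∫ θ in (0:ℝ)..(π/2), Real.cos (π * Real.cos θ) :=
    intervalIntegral.integral_add (hint 0 (π/2)) (gcont.intervalIntegrable 0 (π/2))
  have hcomb : (∫ θ in (-(π/2))..(π/2), Real.cos (π * Real.sin θ))
      = ∫ θ in (0:ℝ)..(π/2),
          (Real.cos (π * Real.sin θ) + Real.cos (π * Real.cos θ)) := by
    rw [hadd, ← hflip, hsplit, hneg]
  rw [hcomb]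
  have hpos := intervalIntegral.intervalIntegral_pos_of_pos_on (f := fun θ =>
      -(Real.cos (π * Real.sin θ) + Real.cos (π * Real.cos θ)))
    ((hcont.add gcont).neg.intervalIntegrable 0 (π/2))
    (fun x hx => by have := pointwise_neg hx; linarith) (by linarith [Real.pi_pos])
  rw [intervalIntegral.integral_neg] at hpos
  linarith

lemma norm_exp_I_pi (ξ : ℝ) : ‖Complex.exp (Complex.I * Real.pi * ξ)‖ = 1 := by
  rw [Complex.norm_exp]
  simp

lemma re_exp_I_pi (ξ : ℝ) : (Complex.exp (Complex.I * Real.pi * ξ)).re = Real.cos (π * ξ) := by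
  rw [show (Complex.I * (π:ℂ) * (ξ:ℂ)) = ((π * ξ : ℝ) : ℂ) * Complex.I by push_cast; ring,
    Complex.exp_ofReal_mul_I_re]

lemma phi_cont : Continuous (fun ξ : ℝ => Complex.exp (Complex.I * Real.pi * ξ)) := by
  fun_prop

lemma integrable_phi (μ : Measure ℝ) [IsFiniteMeasure μ] :
    Integrable (fun ξ : ℝ => Complex.exp (Complex.I * Real.pi * ξ)) μ := by
  apply Integrable.mono' (integrable_const (1:ℝ)) phi_cont.aestronglyMeasurable
  filter_upwards with ξ
  rw [norm_exp_I_pi]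

lemma exp_I_pi_one : Complex.exp (Complex.I * Real.pi * ((1:ℝ):ℂ)) = -1 := by
  rw [show Complex.I * (Real.pi:ℂ) * ((1:ℝ):ℂ) = (Real.pi:ℂ) * Complex.I by push_cast; ring,
    Complex.exp_pi_mul_I]

lemma exp_I_pi_neg_one : Complex.exp (Complex.I * Real.pi * ((-1:ℝ):ℂ)) = -1 := by
  rw [show Complex.I * (Real.pi:ℂ) * ((-1:ℝ):ℂ) = -((Real.pi:ℂ) * Complex.I) by push_cast; ring,
    Complex.exp_neg, Complex.exp_pi_mul_I]
  norm_num

/-- The measure μ_a = ((1−a)/2)(δ_{−1} + δ_{1}) + (a/π)·1_{(−1,1)}(ξ)(1 − ξ²)^{-1/2} dξ. -/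
noncomputable def arcsineDiracMix (a : ℝ) : Measure ℝ :=
  (ENNReal.ofReal ((1 - a) / 2)) • (Measure.dirac (-1) + Measure.dirac 1) +
    (volume.restrict (Set.Ioo (-1 : ℝ) 1)).withDensity
      (fun ξ => ENNReal.ofReal ((a / Real.pi) / Real.sqrt (1 - ξ ^ 2)))

/-- The characteristic function of μ_a at t = π has strictly negative real
part; in particular μ_a is not positive-definite. -/
theorem arcsineDiracMix_charFun_at_pi_neg (a : ℝ) (ha : a ∈ Set.Icc (0 : ℝ) 1) :
    (∫ ξ, Complex.exp (Complex.I * Real.pi * ξ) ∂(arcsineDiracMix a)).re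
        = -(1 - a) + (a / Real.pi) *
            (∫ ξ in Set.Ioo (-1 : ℝ) 1, Real.cos (Real.pi * ξ) / Real.sqrt (1 - ξ ^ 2)) ∧
    (∫ ξ, Complex.exp (Complex.I * Real.pi * ξ) ∂(arcsineDiracMix a)).re < 0 := by
  obtain ⟨ha0, ha1⟩ := ha
  have hpi := Real.pi_pos
  have hd_nonneg : ∀ ξ : ℝ, 0 ≤ (a / Real.pi) / Real.sqrt (1 - ξ ^ 2) :=
    fun ξ => div_nonneg (div_nonneg ha0 hpi.le) (Real.sqrt_nonneg _)
  have hd_int : IntegrableOn (fun ξ => (a / Real.pi) / Real.sqrt (1 - ξ ^ 2))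
      (Set.Ioo (-1:ℝ) 1) := by
    refine (subst_integrableOn (fun _ => a / Real.pi)).2 ?_
    exact integrableOn_const measure_Ioo_lt_top.ne
  have hmeas_f : Measurable (fun ξ : ℝ => ((a / Real.pi) / Real.sqrt (1 - ξ ^ 2)).toNNReal) := by
    apply Measurable.real_toNNReal
    exact measurable_const.div ((Real.continuous_sqrt.comp (by continuity)).measurable)
  have hsmul_int : Integrable (fun ξ : ℝ =>
      ((a / Real.pi) / Real.sqrt (1 - ξ ^ 2)).toNNReal • Complex.exp (Complex.I * Real.pi * ξ))
      (volume.restrict (Set.Ioo (-1:ℝ) 1)) := by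
    apply Integrable.mono' hd_int
    · exact (hmeas_f.coe_nnreal_real.aestronglyMeasurable.smul phi_cont.aestronglyMeasurable)
    · filter_upwards with ξ
      rw [NNReal.smul_def, norm_smul, norm_exp_I_pi, mul_one, Real.norm_eq_abs,
        abs_of_nonneg (by positivity), Real.coe_toNNReal _ (hd_nonneg ξ)]
  have hν₂ : (volume.restrict (Set.Ioo (-1 : ℝ) 1)).withDensity
        (fun ξ => ENNReal.ofReal ((a / Real.pi) / Real.sqrt (1 - ξ ^ 2)))
      = (volume.restrict (Set.Ioo (-1 : ℝ) 1)).withDensity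
        (fun ξ => (((a / Real.pi) / Real.sqrt (1 - ξ ^ 2)).toNNReal : ℝ≥0∞)) := rfl
  have hInt2 : Integrable (fun ξ : ℝ => Complex.exp (Complex.I * Real.pi * ξ))
      ((volume.restrict (Set.Ioo (-1 : ℝ) 1)).withDensity
        (fun ξ => ENNReal.ofReal ((a / Real.pi) / Real.sqrt (1 - ξ ^ 2)))) := by
    rw [hν₂]
    exact (integrable_withDensity_iff_integrable_smul hmeas_f).2 hsmul_int
  have hInt1 : Integrable (fun ξ : ℝ => Complex.exp (Complex.I * Real.pi * ξ))
      ((ENNReal.ofReal ((1 - a) / 2)) • (Measure.dirac (-1) + Measure.dirac 1)) :=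
    (integrable_phi _).smul_measure ENNReal.ofReal_ne_top
  have hre2 : (∫ ξ, Complex.exp (Complex.I * Real.pi * ξ)
        ∂((volume.restrict (Set.Ioo (-1 : ℝ) 1)).withDensity
          (fun ξ => ENNReal.ofReal ((a / Real.pi) / Real.sqrt (1 - ξ ^ 2))))).re
      = (a / Real.pi) *
          (∫ ξ in Set.Ioo (-1 : ℝ) 1, Real.cos (Real.pi * ξ) / Real.sqrt (1 - ξ ^ 2)) := by
    rw [hν₂, integral_withDensity_eq_integral_smul hmeas_f]
    have hIR := integral_re hsmul_int
    simp only [RCLike.re_to_complex] at hIR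
    rw [← hIR]
    rw [show (fun ξ : ℝ => (((a / Real.pi) / Real.sqrt (1 - ξ ^ 2)).toNNReal
          • Complex.exp (Complex.I * Real.pi * ξ)).re)
        = fun ξ : ℝ => (a / Real.pi) * (Real.cos (Real.pi * ξ) / Real.sqrt (1 - ξ ^ 2)) from ?_]
    · exact integral_const_mul _ _
    · funext ξ
      rw [NNReal.smul_def, Complex.real_smul, Complex.mul_re]
      simp only [Complex.ofReal_re, Complex.ofReal_im, zero_mul, sub_zero]
      rw [re_exp_I_pi, Real.coe_toNNReal _ (hd_nonneg ξ), div_mul_eq_mul_div, mul_div_assoc]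
  have hre1 : (∫ ξ : ℝ, Complex.exp (Complex.I * Real.pi * ξ)
        ∂((ENNReal.ofReal ((1 - a) / 2)) • (Measure.dirac (-1 : ℝ) + Measure.dirac (1 : ℝ)))).re
      = -(1 - a) := by
    rw [integral_smul_measure,
      integral_add_measure (integrable_phi _) (integrable_phi _),
      integral_dirac, integral_dirac]
    rw [exp_I_pi_one, exp_I_pi_neg_one]
    rw [ENNReal.toReal_ofReal (by linarith : (0:ℝ) ≤ (1 - a)/2)]
    simp only [Complex.real_smul, Complex.mul_re]
    norm_num
  have hmain : (∫ ξ, Complex.exp (Complex.I * Real.pi * ξ) ∂(arcsineDiracMix a)).re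
      = -(1 - a) + (a / Real.pi) *
          (∫ ξ in Set.Ioo (-1 : ℝ) 1, Real.cos (Real.pi * ξ) / Real.sqrt (1 - ξ ^ 2)) := by
    rw [arcsineDiracMix, integral_add_measure hInt1 hInt2, Complex.add_re, hre1, hre2]
  refine ⟨hmain, ?_⟩
  rw [hmain]
  have hI := key_integral_neg
  rcases eq_or_lt_of_le ha0 with h0 | h0
  · rw [← h0]; norm_num
  · have h1 : (a / Real.pi) *
        (∫ ξ in Set.Ioo (-1 : ℝ) 1, Real.cos (Real.pi * ξ) / Real.sqrt (1 - ξ ^ 2)) < 0 :=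
      mul_neg_of_pos_of_neg (div_pos h0 hpi) hI
    linarith
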